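/- Scalar-to-matrix reduction for multiclass linear models (Theorem 3.7 with Γ = all finitely supported distributions): let l : ℝ^c × ℝ^c → ℝ be differentiable in its first argument with gradient ∇₁l, let W be a d × c real matrix, and for (x,y) ∈ ℝ^d × ℝ^c set G(x,y) = x·(∇₁l(Wᵀx, y))ᵀ (the outer product x ⊗ ∇₁l(Wᵀx, y), a d × c matrix). Let μ be a finitely supported probability measure on ℝ^d × ℝ^c with Wᵀ·G(μ) an invertible c × c matrix, and let λ ∈ [0,1]. Then there exists a finitely supported probability measure ν with (1−λ)·G(μ) + λ·G(ν) = 0 (as d × c matrices) if and only if there exists a finitely supported probability measure ν' with (1−λ)·Wᵀ·G(μ) + λ·E_{(x,y)∼ν'}[(Wᵀx)·(∇₁l(Wᵀx, y))ᵀ] = 0 (as c × c matrices). -/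
import Mathlib


open scoped BigOperators

/-- A finitely supported probability measure, represented as a finitely supported
weight function which is nonnegative and sums to 1. -/
def IsFinProb {Z : Type*} (p : Z →₀ ℝ) : Prop :=
  (∀ z, 0 ≤ p z) ∧ p.sum (fun _ w => w) = 1

/-- Expectation `E_{z ∼ p}[g z]` of a vector-valued map under a finitely supported measure. -/
noncomputable def expect {Z E : Type*} [AddCommMonoid E] [Module ℝ E]
    (p : Z →₀ ℝ) (g : Z → E) : E :=
  p.sum fun z w => w • g z

/-- `Wᵀx` as an element of `EuclideanSpace ℝ (Fin c)`. -/
noncomputable def WtX {d c : ℕ} (W : Matrix (Fin d) (Fin c) ℝ)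
    (x : EuclideanSpace ℝ (Fin d)) : EuclideanSpace ℝ (Fin c) :=
  (WithLp.equiv 2 (Fin c → ℝ)).symm (Matrix.mulVec W.transpose (fun i => x i))

/-- Pointwise gradient `G(x,y) = x ⊗ ∇₁l(Wᵀx, y)` of the multiclass linear-model loss
`ℓ(x,y; W) = l(Wᵀx, y)`, as a `d × c` matrix. -/
noncomputable def gmc {d c : ℕ}
    (gradl : EuclideanSpace ℝ (Fin c) → EuclideanSpace ℝ (Fin c) → EuclideanSpace ℝ (Fin c))
    (W : Matrix (Fin d) (Fin c) ℝ)
    (p : EuclideanSpace ℝ (Fin d) × EuclideanSpace ℝ (Fin c)) :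
    Matrix (Fin d) (Fin c) ℝ :=
  Matrix.vecMulVec (fun i => p.1 i) (fun j => gradl (WtX W p.1) p.2 j)

/-- Scalar-side pointwise gradient `(Wᵀx) ⊗ ∇₁l(Wᵀx, y)`, a `c × c` matrix. -/
noncomputable def gmcScalar {d c : ℕ}
    (gradl : EuclideanSpace ℝ (Fin c) → EuclideanSpace ℝ (Fin c) → EuclideanSpace ℝ (Fin c))
    (W : Matrix (Fin d) (Fin c) ℝ)
    (p : EuclideanSpace ℝ (Fin d) × EuclideanSpace ℝ (Fin c)) :
    Matrix (Fin c) (Fin c) ℝ :=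
  Matrix.vecMulVec (fun i => WtX W p.1 i) (fun j => gradl (WtX W p.1) p.2 j)


private lemma aux_mul_expect {d c e : ℕ} {Z : Type*} (M : Matrix (Fin e) (Fin d) ℝ)
    (p : Z →₀ ℝ) (g : Z → Matrix (Fin d) (Fin c) ℝ) :
    M * expect p g = expect p (fun z => M * g z) := by
  classical
  unfold expect
  rw [Finsupp.sum, Finsupp.sum, Matrix.mul_sum]
  exact Finset.sum_congr rfl fun z _ => Matrix.mul_smul M (p z) (g z)

private lemma aux_transpose_mul_gmc {d c : ℕ}
    (gradl : EuclideanSpace ℝ (Fin c) → EuclideanSpace ℝ (Fin c) → EuclideanSpace ℝ (Fin c))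
    (W : Matrix (Fin d) (Fin c) ℝ)
    (p : EuclideanSpace ℝ (Fin d) × EuclideanSpace ℝ (Fin c)) :
    W.transpose * gmc gradl W p = gmcScalar gradl W p := by
  ext i j
  simp [gmc, gmcScalar, WtX, Matrix.mul_apply, Matrix.vecMulVec_apply, Matrix.mulVec,
    dotProduct, Finset.sum_mul, mul_assoc]

private lemma aux_expect_mapDomain {Z : Type*} {E : Type*} [AddCommMonoid E] [Module ℝ E]
    (f : Z → Z) (p : Z →₀ ℝ) (g : Z → E) :
    expect (p.mapDomain f) g = expect p (fun z => g (f z)) := by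
  unfold expect
  apply Finsupp.sum_mapDomain_index
  · intro b; simp
  · intro b m₁ m₂; rw [add_smul]

private lemma aux_isFinProb_mapDomain {Z : Type*} (f : Z → Z) (p : Z →₀ ℝ)
    (hp : IsFinProb p) : IsFinProb (p.mapDomain f) := by
  classical
  constructor
  · intro z
    rw [Finsupp.mapDomain, Finsupp.sum_apply, Finsupp.sum]
    apply Finset.sum_nonneg
    intro a _
    rw [Finsupp.single_apply]
    split
    · exact hp.1 a
    · exact le_refl 0
  · have h := Finsupp.sum_mapDomain_index (f := f) (s := p) (h := fun _ w => w)
      (fun _ => rfl) (fun _ _ _ => rfl)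
    rw [h]
    exact hp.2

/-- scalar-to-matrix reduction for multiclass linear models
(Theorem 3.7 with Γ = all finitely supported distributions): if `Wᵀ·G(μ)` is
invertible, the `d × c` cancellation problem is solvable iff the `c × c` one is. -/
theorem stmt13 {d c : ℕ}
    (l : EuclideanSpace ℝ (Fin c) → EuclideanSpace ℝ (Fin c) → ℝ)
    (gradl : EuclideanSpace ℝ (Fin c) → EuclideanSpace ℝ (Fin c) → EuclideanSpace ℝ (Fin c))
    (hl : ∀ (h y : EuclideanSpace ℝ (Fin c)), HasGradientAt (fun h' => l h' y) (gradl h y) h)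
    (W : Matrix (Fin d) (Fin c) ℝ)
    (μ : (EuclideanSpace ℝ (Fin d) × EuclideanSpace ℝ (Fin c)) →₀ ℝ) (hμ : IsFinProb μ)
    (hinv : IsUnit (W.transpose * expect μ (gmc gradl W)))
    (lam : ℝ) (h0 : 0 ≤ lam) (h1 : lam ≤ 1) :
    (∃ ν : (EuclideanSpace ℝ (Fin d) × EuclideanSpace ℝ (Fin c)) →₀ ℝ, IsFinProb ν ∧
        (1 - lam) • expect μ (gmc gradl W) + lam • expect ν (gmc gradl W) = 0) ↔
    (∃ ν' : (EuclideanSpace ℝ (Fin d) × EuclideanSpace ℝ (Fin c)) →₀ ℝ, IsFinProb ν' ∧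
        (1 - lam) • (W.transpose * expect μ (gmc gradl W)) +
          lam • expect ν' (gmcScalar gradl W) = 0) := by
  constructor
  · rintro ⟨ν, hν, heq⟩
    refine ⟨ν, hν, ?_⟩
    have h2 := congrArg (fun M => W.transpose * M) heq
    simp only [Matrix.mul_add, Matrix.mul_smul, Matrix.mul_zero,
      aux_mul_expect, aux_transpose_mul_gmc] at h2
    simp only [aux_mul_expect, aux_transpose_mul_gmc]
    exact h2
  · rintro ⟨ν', hν', heq⟩
    have hu : (hinv.unit : Matrix (Fin c) (Fin c) ℝ) = W.transpose * expect μ (gmc gradl W) :=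
      hinv.unit_spec
    set B : Matrix (Fin c) (Fin c) ℝ := ↑hinv.unit⁻¹ with hB
    have hB1 : (W.transpose * expect μ (gmc gradl W)) * B = 1 := by
      rw [← hu]; exact hinv.unit.mul_inv
    have hB2 : B * (W.transpose * expect μ (gmc gradl W)) = 1 := by
      rw [← hu]; exact hinv.unit.inv_mul
    set A : Matrix (Fin d) (Fin c) ℝ := expect μ (gmc gradl W) * B with hA
    have hWA : W.transpose * A = 1 := by
      rw [hA, ← Matrix.mul_assoc]; exact hB1
    have hAW : A * (W.transpose * expect μ (gmc gradl W)) = expect μ (gmc gradl W) := by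
      rw [hA, Matrix.mul_assoc, hB2, Matrix.mul_one]
    set T : (EuclideanSpace ℝ (Fin d) × EuclideanSpace ℝ (Fin c)) →
        (EuclideanSpace ℝ (Fin d) × EuclideanSpace ℝ (Fin c)) :=
      fun p => ((WithLp.equiv 2 (Fin d → ℝ)).symm (A.mulVec (fun i => WtX W p.1 i)), p.2)
      with hT
    have hWtX : ∀ p : EuclideanSpace ℝ (Fin d) × EuclideanSpace ℝ (Fin c),
        WtX W (T p).1 = WtX W p.1 := by
      intro p
      unfold WtX
      congr 1
      have : (fun i => ((WithLp.equiv 2 (Fin d → ℝ)).symm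
          (A.mulVec (fun i => WtX W p.1 i))) i) = A.mulVec (fun i => WtX W p.1 i) := rfl
      rw [hT]
      simp only
      rw [this]
      have h2 : (fun i => WtX W p.1 i) = W.transpose.mulVec (fun i => p.1 i) := rfl
      rw [h2, Matrix.mulVec_mulVec, hWA, Matrix.one_mulVec]
    have hgmcT : ∀ p, gmc gradl W (T p) = A * gmcScalar gradl W p := by
      intro p
      have h1 : gmc gradl W (T p) = Matrix.vecMulVec (A.mulVec (fun i => WtX W p.1 i))
          (fun j => gradl (WtX W p.1) p.2 j) := by
        unfold gmc
        rw [hWtX p]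
        rfl
      rw [h1]
      ext i j
      simp [gmcScalar, Matrix.mul_apply, Matrix.vecMulVec_apply, Matrix.mulVec,
        dotProduct, Finset.sum_mul, mul_assoc]
    refine ⟨ν'.mapDomain T, aux_isFinProb_mapDomain T ν' hν', ?_⟩
    have hEx : expect (ν'.mapDomain T) (gmc gradl W) = A * expect ν' (gmcScalar gradl W) := by
      rw [aux_expect_mapDomain, aux_mul_expect]
      exact congrArg _ (funext fun p => hgmcT p)
    rw [hEx]
    calc (1 - lam) • expect μ (gmc gradl W) + lam • (A * expect ν' (gmcScalar gradl W))
        = A * ((1 - lam) • (W.transpose * expect μ (gmc gradl W)) +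
            lam • expect ν' (gmcScalar gradl W)) := by
          rw [Matrix.mul_add, Matrix.mul_smul, Matrix.mul_smul, hAW]
      _ = 0 := by rw [heq, Matrix.mul_zero]
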